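/- arXiv:2308.10048 — 2 statements merged into one kernel-verified Lean document; each statement's English description precedes it below -/
import Mathlib

section
/- Let S(A) := (1 + |A|)^{q-2} A for 1 < q < ∞. Then S is strictly monotone: for all symmetric 3×3 real matrices A ≠ B, one has (S(A) − S(B)) : (A − B) > 0. -/
open scoped BigOperators

/-- Frobenius inner product of 3×3 real matrices. -/
noncomputable def frobInner (A B : Matrix (Fin 3) (Fin 3) ℝ) : ℝ :=
  ∑ i, ∑ j, A i j * B i j

/-- Frobenius norm of a 3×3 real matrix. -/
noncomputable def frobNorm (A : Matrix (Fin 3) (Fin 3) ℝ) : ℝ :=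
  Real.sqrt (∑ i, ∑ j, (A i j) ^ 2)

/-- The viscous stress tensor S(A) = (1 + |A|)^(q-2) A. -/
noncomputable def stressS (q : ℝ) (A : Matrix (Fin 3) (Fin 3) ℝ) :
    Matrix (Fin 3) (Fin 3) ℝ :=
  ((1 + frobNorm A) ^ (q - 2) : ℝ) • A

/-!
Write `φ(t) = (1 + t)^(q-2)`, so that `S(A) = φ(|A|) A`. Expanding the inner product and using
Cauchy–Schwarz `A : B ≤ |A| |B|` gives
`(S(A) - S(B)) : (A - B) ≥ (|A| - |B|) (φ(|A|) |A| - φ(|B|) |B|)`,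
which is positive when `|A| ≠ |B|` because `t ↦ φ(t) t = (1 + t)^(q-1) · t/(1 + t)` is strictly
increasing for `q ≥ 1`. When `|A| = |B|` the left side is `φ(|A|) |A - B|²`.
-/

open Set RealInnerProductSpace

lemma StrictMonoOn.sub_mul_sub_pos {g : ℝ → ℝ} {s : Set ℝ} (hg : StrictMonoOn g s) {a b : ℝ}
    (ha : a ∈ s) (hb : b ∈ s) (hab : a ≠ b) : 0 < (a - b) * (g a - g b) := by
  rcases hab.lt_or_gt with h | h
  · exact mul_pos_of_neg_of_neg (sub_neg.2 h) (sub_neg.2 (hg ha hb h))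
  · exact mul_pos (sub_pos.2 h) (sub_pos.2 (hg hb ha h))

lemma strictMonoOn_one_add_rpow_mul_self {q : ℝ} (hq : 1 ≤ q) :
    StrictMonoOn (fun t : ℝ => (1 + t) ^ (q - 2) * t) (Ici 0) := by
  have factor : ∀ t : ℝ, 0 ≤ t → (1 + t) ^ (q - 2) * t = (1 + t) ^ (q - 1) * (t / (1 + t)) := by
    intro t ht
    rw [show q - 2 = q - 1 - 1 by ring, Real.rpow_sub (by linarith), Real.rpow_one]
    ring
  intro s (hs : 0 ≤ s) t (ht : 0 ≤ t) hst
  simp only [factor s hs, factor t ht]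
  have hpow : (1 + s) ^ (q - 1) ≤ (1 + t) ^ (q - 1) :=
    Real.rpow_le_rpow (by linarith) (by linarith) (by linarith)
  have hfrac : s / (1 + s) < t / (1 + t) := by
    rw [div_lt_div_iff₀ (by linarith) (by linarith)]
    linarith
  exact mul_lt_mul' hpow hfrac (by positivity) (Real.rpow_pos_of_pos (by linarith) _)

lemma real_inner_smul_norm_sub_smul_norm_pos {E : Type*} [NormedAddCommGroup E]
    [InnerProductSpace ℝ E] {φ : ℝ → ℝ} (hφ : StrictMonoOn (fun t => φ t * t) (Ici 0))
    {x y : E} (hxy : x ≠ y) : 0 < ⟪φ ‖x‖ • x - φ ‖y‖ • y, x - y⟫ := by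
  have hpos : ∀ t, 0 < t → 0 < φ t := fun t ht =>
    pos_of_mul_pos_left (by simpa using hφ self_mem_Ici ht.le ht) ht.le
  rcases eq_or_ne ‖x‖ ‖y‖ with hnorm | hnorm
  · have hx : 0 < ‖x‖ := by
      by_contra! h
      have hx0 : x = 0 := norm_le_zero_iff.1 h
      have hy0 : y = 0 := norm_le_zero_iff.1 (hnorm ▸ h)
      exact hxy (hx0.trans hy0.symm)
    rw [hnorm, ← smul_sub, real_inner_smul_left, real_inner_self_eq_norm_sq]
    exact mul_pos (hpos _ (hnorm ▸ hx)) (pow_pos (norm_pos_iff.2 (sub_ne_zero.2 hxy)) 2)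
  · have hcs : (φ ‖x‖ + φ ‖y‖) * ⟪x, y⟫ ≤ (φ ‖x‖ + φ ‖y‖) * (‖x‖ * ‖y‖) := by
      rcases eq_or_ne x 0 with rfl | hx
      · simp
      rcases eq_or_ne y 0 with rfl | hy
      · simp
      exact mul_le_mul_of_nonneg_left (real_inner_le_norm x y)
        (add_pos (hpos _ (norm_pos_iff.2 hx)) (hpos _ (norm_pos_iff.2 hy))).le
    have hgap := hφ.sub_mul_sub_pos (norm_nonneg x) (norm_nonneg y) hnorm
    have hexpand : ⟪φ ‖x‖ • x - φ ‖y‖ • y, x - y⟫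
        = φ ‖x‖ * ‖x‖ ^ 2 - (φ ‖x‖ + φ ‖y‖) * ⟪x, y⟫ + φ ‖y‖ * ‖y‖ ^ 2 := by
      simp only [inner_sub_left, inner_sub_right, real_inner_smul_left,
        real_inner_self_eq_norm_sq, real_inner_comm x y]
      ring
    rw [hexpand]
    nlinarith

def frobVec (A : Matrix (Fin 3) (Fin 3) ℝ) : EuclideanSpace ℝ (Fin 3 × Fin 3) :=
  WithLp.toLp 2 (Function.uncurry A)

lemma frobVec_injective : Function.Injective frobVec := fun _ _ h =>
  Function.uncurry_injective (WithLp.toLp_injective 2 h)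

lemma frobVec_sub (A B : Matrix (Fin 3) (Fin 3) ℝ) : frobVec (A - B) = frobVec A - frobVec B :=
  rfl

lemma frobVec_smul (c : ℝ) (A : Matrix (Fin 3) (Fin 3) ℝ) : frobVec (c • A) = c • frobVec A :=
  rfl

lemma inner_frobVec (A B : Matrix (Fin 3) (Fin 3) ℝ) : ⟪frobVec A, frobVec B⟫ = frobInner A B := by
  simp only [PiLp.inner_apply, frobVec, frobInner, Fintype.sum_prod_type, RCLike.inner_apply,
    conj_trivial, mul_comm]
  rfl

lemma norm_frobVec (A : Matrix (Fin 3) (Fin 3) ℝ) : ‖frobVec A‖ = frobNorm A := by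
  simp only [EuclideanSpace.norm_eq, frobVec, frobNorm, Fintype.sum_prod_type, Real.norm_eq_abs,
    sq_abs]
  rfl

/-- Strict monotonicity: for `1 < q < ∞`, `(S(A) − S(B)) : (A − B) > 0`
for all symmetric `A ≠ B`. -/
theorem monotonicity_stress (q : ℝ) (hq : 1 < q) :
    ∀ A B : Matrix (Fin 3) (Fin 3) ℝ, A.IsSymm → B.IsSymm → A ≠ B →
      0 < frobInner (stressS q A - stressS q B) (A - B) := by
  intro A B _ _ hAB
  have key := real_inner_smul_norm_sub_smul_norm_pos
    (strictMonoOn_one_add_rpow_mul_self hq.le) (frobVec_injective.ne hAB)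
  simpa only [stressS, ← inner_frobVec, frobVec_sub, frobVec_smul, norm_frobVec] using key
end

section
/- Let Ω ⊂ ℝ³ be a bounded open set and let φᵏ, φ : [0,T] × ℝ³ → ℝ³ be homeomorphisms in the space variable. Suppose φᵏ → φ uniformly on [0,T] × closure(Ω). Let K be a compact subset of the 'moving cylinder' Q := ⋃_{t∈[0,T]} {t} × φ(t,Ω), such that for some δ > 0, K ⊂ ⋃_{t∈[0,T]} {t} × φ(t, Ω_(δ)), where Ω_(δ) := {x ∈ Ω : dist(x,∂Ω) > δ}. Then there exists k₀ such that for all k ≥ k₀, K ⊂ ⋃_{t∈[0,T]} {t} × φᵏ(t, Ω_(δ/2)), provided each φᵏ(t,·)⁻¹ is Lipschitz with a constant uniform in k and t. -/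
/-- For an open set `U ⊆ ℝ³` and `δ > 0`, the set `U_(δ)` of points of `U`
at distance more than `δ` from the boundary. -/
def innerSet (U : Set (EuclideanSpace ℝ (Fin 3))) (δ : ℝ) :
    Set (EuclideanSpace ℝ (Fin 3)) :=
  {x ∈ U | δ < Metric.infDist x (frontier U)}

/-!
A point `φ(t,y)` with `y ∈ Ω_(δ)` is hit by `φᵏ(t,·)` at `x = φᵏ(t,·)⁻¹(φ(t,y))`, and
`dist x y = dist (φᵏ(t,·)⁻¹(φ(t,y))) (φᵏ(t,·)⁻¹(φᵏ(t,y))) ≤ L · dist (φ(t,y)) (φᵏ(t,y))`,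
which is at most `δ/2` once `k` is large, uniformly in `t` and `y`. Moving a point of `Ω_(δ)`
by at most `δ/2` lands in `Ω_(δ/2)`, because a ball around `y` of radius less than
`dist(y, ∂Ω)` stays inside `Ω`.
-/

open Function Metric

theorem mem_of_dist_lt_infDist_frontier {E : Type*} [NormedAddCommGroup E] [NormedSpace ℝ E]
    [FiniteDimensional ℝ E] {U : Set E} {x y : E} (hy : y ∈ U)
    (hxy : dist x y < infDist y (frontier U)) : x ∈ U := by
  by_contra hx
  obtain ⟨z, hz, hyz⟩ := exists_mem_frontier_infDist_compl_eq_dist hy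
    (Set.ne_univ_iff_exists_notMem U |>.2 ⟨x, hx⟩)
  have hyx : infDist y Uᶜ ≤ dist y x := infDist_le_dist_of_mem hx
  have hfr : infDist y (frontier U) ≤ dist y z := infDist_le_dist_of_mem hz
  rw [dist_comm] at hxy
  linarith

theorem mem_innerSet_sub_of_dist_le {U : Set (EuclideanSpace ℝ (Fin 3))} {δ ε : ℝ}
    {x y : EuclideanSpace ℝ (Fin 3)} (hy : y ∈ innerSet U δ) (hxy : dist x y ≤ ε)
    (hε : ε ≤ δ) : x ∈ innerSet U (δ - ε) :=
  ⟨mem_of_dist_lt_infDist_frontier hy.1 (by linarith [hy.2]),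
    by linarith [hy.2, infDist_le_infDist_add_dist (x := y) (y := x) (s := frontier U),
      dist_comm x y]⟩

theorem image_innerSet_subset_image_innerSet_sub {U : Set (EuclideanSpace ℝ (Fin 3))}
    {δ ε L : ℝ} {f g : EuclideanSpace ℝ (Fin 3) → EuclideanSpace ℝ (Fin 3)}
    (hg : Bijective g)
    (hlip : ∀ u v, dist (invFun g u) (invFun g v) ≤ L * dist u v)
    (hclose : ∀ y ∈ innerSet U δ, L * dist (f y) (g y) ≤ ε) (hε : ε ≤ δ) :
    f '' innerSet U δ ⊆ g '' innerSet U (δ - ε) := by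
  rintro _ ⟨y, hy, rfl⟩
  refine ⟨invFun g (f y), mem_innerSet_sub_of_dist_le hy ?_ hε, invFun_eq (hg.2 _)⟩
  calc dist (invFun g (f y)) y = dist (invFun g (f y)) (invFun g (g y)) := by
        rw [leftInverse_invFun hg.1]
    _ ≤ L * dist (f y) (g y) := hlip _ _
    _ ≤ ε := hclose y hy

theorem compact_subset_eventually_general (T δ L : ℝ) (hδ : 0 < δ) (hL : 0 ≤ L)
    (Ω : Set (EuclideanSpace ℝ (Fin 3)))
    (φk : ℕ → ℝ → EuclideanSpace ℝ (Fin 3) → EuclideanSpace ℝ (Fin 3))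
    (φ : ℝ → EuclideanSpace ℝ (Fin 3) → EuclideanSpace ℝ (Fin 3))
    (hbijk : ∀ k, ∀ t ∈ Set.Icc (0 : ℝ) T, Function.Bijective (φk k t))
    (hlipinv : ∀ k, ∀ t ∈ Set.Icc (0 : ℝ) T, ∀ x y,
      dist (Function.invFun (φk k t) x) (Function.invFun (φk k t) y) ≤ L * dist x y)
    (hconv : ∀ ε > (0 : ℝ), ∃ N : ℕ, ∀ k ≥ N, ∀ t ∈ Set.Icc (0 : ℝ) T,
      ∀ x ∈ closure Ω, dist (φk k t x) (φ t x) ≤ ε)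
    (K : Set (ℝ × EuclideanSpace ℝ (Fin 3)))
    (hKsub : K ⊆ ⋃ t ∈ Set.Icc (0 : ℝ) T, {t} ×ˢ ((φ t) '' innerSet Ω δ)) :
    ∃ k₀ : ℕ, ∀ k ≥ k₀,
      K ⊆ ⋃ t ∈ Set.Icc (0 : ℝ) T, {t} ×ˢ ((φk k t) '' innerSet Ω (δ / 2)) := by
  obtain ⟨N, hN⟩ := hconv (δ / (2 * (L + 1))) (by positivity)
  refine ⟨N, fun k hk => hKsub.trans <|
    Set.iUnion₂_mono fun t ht => Set.prod_mono subset_rfl ?_⟩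
  rw [← sub_half δ]
  refine image_innerSet_subset_image_innerSet_sub (hbijk k t ht) (hlipinv k t ht)
    (fun y hy => ?_) (half_le_self hδ.le)
  calc L * dist (φ t y) (φk k t y) ≤ L * (δ / (2 * (L + 1))) := by
        rw [dist_comm]
        exact mul_le_mul_of_nonneg_left (hN k hk t ht y (subset_closure hy.1)) hL
    _ ≤ δ / 2 := by
        rw [mul_div_assoc', div_le_div_iff₀ (by positivity) two_pos]
        nlinarith

/-- If `φᵏ → φ` uniformly on `[0,T] × closure Ω`, the inverses `φᵏ(t,·)⁻¹` are
Lipschitz with a constant uniform in `k` and `t`, and a compact set `K` is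
contained in `⋃ₜ {t} × φ(t, Ω_(δ))`, then for all large `k`,
`K ⊆ ⋃ₜ {t} × φᵏ(t, Ω_(δ/2))`. -/
theorem compact_subset_eventually (T δ L : ℝ) (hT : 0 ≤ T) (hδ : 0 < δ) (hL : 0 ≤ L)
    (Ω : Set (EuclideanSpace ℝ (Fin 3))) (hΩo : IsOpen Ω) (hΩb : Bornology.IsBounded Ω)
    (φk : ℕ → ℝ → EuclideanSpace ℝ (Fin 3) → EuclideanSpace ℝ (Fin 3))
    (φ : ℝ → EuclideanSpace ℝ (Fin 3) → EuclideanSpace ℝ (Fin 3))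
    (hbijk : ∀ k, ∀ t ∈ Set.Icc (0 : ℝ) T, Function.Bijective (φk k t))
    (hbij : ∀ t ∈ Set.Icc (0 : ℝ) T, Function.Bijective (φ t))
    (hlipinv : ∀ k, ∀ t ∈ Set.Icc (0 : ℝ) T, ∀ x y,
      dist (Function.invFun (φk k t) x) (Function.invFun (φk k t) y) ≤ L * dist x y)
    (hconv : ∀ ε > (0 : ℝ), ∃ N : ℕ, ∀ k ≥ N, ∀ t ∈ Set.Icc (0 : ℝ) T,
      ∀ x ∈ closure Ω, dist (φk k t x) (φ t x) ≤ ε)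
    (K : Set (ℝ × EuclideanSpace ℝ (Fin 3))) (hK : IsCompact K)
    (hKsub : K ⊆ ⋃ t ∈ Set.Icc (0 : ℝ) T, {t} ×ˢ ((φ t) '' innerSet Ω δ)) :
    ∃ k₀ : ℕ, ∀ k ≥ k₀,
      K ⊆ ⋃ t ∈ Set.Icc (0 : ℝ) T, {t} ×ˢ ((φk k t) '' innerSet Ω (δ / 2)) :=
  compact_subset_eventually_general T δ L hδ hL Ω φk φ hbijk hlipinv hconv K hKsub
end
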